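/- arXiv:2501.11341 — 5 statements merged into one kernel-verified Lean document; each statement's English description precedes it below -/
import Mathlib

section
/- Let W be an n×r nonnegative matrix and h^t ∈ ℝʳ a vector with strictly positive entries such that (W^T W h^t)_a > 0 for all a. Define the diagonal matrix K by K_{ab} = δ_{ab} (W^T W h^t)_a / h^t_a. Then the matrix K − W^T W is positive semidefinite. -/
open Finset

theorem K_minus_gram_posSemidef {n r : ℕ}
    (W : Fin n → Fin r → ℝ) (hW : ∀ i a, 0 ≤ W i a)
    (ht : Fin r → ℝ) (hht : ∀ a, 0 < ht a)
    (hpos : ∀ a, 0 < ∑ i, ∑ b, W i a * W i b * ht b)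
    (K : Fin r → Fin r → ℝ)
    (hK : ∀ a b, K a b = if a = b then (∑ i, ∑ c, W i a * W i c * ht c) / ht a else 0) :
    ∀ ν : Fin r → ℝ,
      0 ≤ ∑ a, ∑ b, ν a * (K a b - ∑ i, W i a * W i b) * ν b := by
  intro ν
  set A : Fin r → Fin r → ℝ := fun a b => ∑ i, W i a * W i b with hA
  have hA0 : ∀ a b, 0 ≤ A a b := fun a b =>
    Finset.sum_nonneg fun i _ => mul_nonneg (hW i a) (hW i b)
  have hAsym : ∀ a b, A a b = A b a := fun a b =>
    Finset.sum_congr rfl fun i _ => mul_comm _ _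
  set f : Fin r → Fin r → ℝ :=
    fun a b => A a b * ht b * ν a ^ 2 / ht a - A a b * (ν a * ν b) with hf
  have key : ∀ a b, 0 ≤ f a b + f b a := by
    intro a b
    have h1 : ht a ≠ 0 := (hht a).ne'
    have h2 : ht b ≠ 0 := (hht b).ne'
    have heq : f a b + f b a
        = A a b / (ht a * ht b) * (ht b * ν a - ht a * ν b) ^ 2 := by
      simp only [hf, hAsym b a]
      field_simp
      ring
    rw [heq]
    exact mul_nonneg (div_nonneg (hA0 a b) (mul_pos (hht a) (hht b)).le) (sq_nonneg _)
  have hT : (∑ a, ∑ b, ν a * (K a b - A a b) * ν b) = ∑ a, ∑ b, f a b := by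
    refine Finset.sum_congr rfl fun a _ => ?_
    have hdiag : (∑ i, ∑ c, W i a * W i c * ht c) = ∑ c, A a c * ht c := by
      rw [Finset.sum_comm]
      exact Finset.sum_congr rfl fun c _ => (Finset.sum_mul _ _ _).symm
    have hb : ∀ b, ν a * (K a b - A a b) * ν b
        = ν a * K a b * ν b - (A a b * (ν a * ν b)) := by
      intro b; ring
    rw [Finset.sum_congr rfl fun b _ => hb b, Finset.sum_sub_distrib]
    have hKsum : (∑ b, ν a * K a b * ν b)
        = ∑ b, A a b * ht b * ν a ^ 2 / ht a := by
      have : (∑ b, ν a * K a b * ν b)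
          = ∑ b, (if a = b then ν a * ((∑ c, A a c * ht c) / ht a) * ν b else 0) := by
        refine Finset.sum_congr rfl fun b _ => ?_
        rw [hK a b, hdiag]
        by_cases h : a = b <;> simp [h]
      rw [this, Finset.sum_ite_eq Finset.univ a
        (fun b => ν a * ((∑ c, A a c * ht c) / ht a) * ν b)]
      simp only [Finset.mem_univ, if_true]
      rw [Finset.sum_div]
      rw [Finset.mul_sum, Finset.sum_mul]
      refine Finset.sum_congr rfl fun c _ => ?_
      field_simp
    rw [hKsum, ← Finset.sum_sub_distrib]
  rw [hT]
  have h2T : (0:ℝ) ≤ ∑ a, ∑ b, (f a b + f b a) :=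
    Finset.sum_nonneg fun a _ => Finset.sum_nonneg fun b _ => key a b
  have hsplit : (∑ a, ∑ b, (f a b + f b a))
      = (∑ a, ∑ b, f a b) + (∑ a, ∑ b, f b a) := by
    rw [← Finset.sum_add_distrib]
    exact Finset.sum_congr rfl fun a _ => Finset.sum_add_distrib
  have hswap : (∑ a, ∑ b, f b a) = ∑ a, ∑ b, f a b := Finset.sum_comm
  rw [hsplit, hswap] at h2T
  linarith
end

section
/- Let W ∈ ℝ^{n×r} be nonnegative, v ∈ ℝⁿ, F(h) = (1/2)‖v − Wh‖², and let h^t have positive entries with (W^T W h^t)_a > 0 for all a. Define K_{ab} = δ_{ab}(W^T W h^t)_a / h^t_a and G(h, h^t) = F(h^t) + (h − h^t)^T ∇F(h^t) + (1/2)(h − h^t)^T K (h − h^t). Then G(h, h^t) ≥ F(h) for all h, and G(h^t, h^t) = F(h^t). -/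
open Finset

theorem lemma2_auxiliary_function {n r : ℕ}
    (W : Fin n → Fin r → ℝ) (hW : ∀ i a, 0 ≤ W i a)
    (v : Fin n → ℝ)
    (ht : Fin r → ℝ) (hht : ∀ a, 0 < ht a)
    (hpos : ∀ a, 0 < ∑ i, ∑ b, W i a * W i b * ht b)
    (F : (Fin r → ℝ) → ℝ)
    (hF : ∀ h, F h = (1 / 2) * ∑ i, (v i - ∑ a, W i a * h a) ^ 2)
    (G : (Fin r → ℝ) → ℝ)
    (hG : ∀ h, G h = F ht
        + ∑ a, (h a - ht a) * (∑ i, W i a * ((∑ b, W i b * ht b) - v i))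
        + (1 / 2) * ∑ a, (h a - ht a) ^ 2 *
            ((∑ i, ∑ b, W i a * W i b * ht b) / ht a)) :
    (∀ h, G h ≥ F h) ∧ G ht = F ht := by
  constructor
  · intro h
    set d : Fin r → ℝ := fun a => h a - ht a with hd
    set e : Fin n → ℝ := fun i => v i - ∑ b, W i b * ht b with he
    set s : Fin n → ℝ := fun i => ∑ a, W i a * d a with hs
    have hsplit : ∀ i, v i - ∑ a, W i a * h a = e i - s i := by
      intro i
      simp only [he, hs, hd]
      rw [show (∑ a, W i a * h a) = ∑ a, W i a * ht a + ∑ a, W i a * (h a - ht a) by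
        rw [← Finset.sum_add_distrib]; exact Finset.sum_congr rfl fun a _ => by ring]
      ring
    have hcross : ∑ a, d a * (∑ i, W i a * ((∑ b, W i b * ht b) - v i))
        = -∑ i, e i * s i := by
      simp only [Finset.mul_sum]
      rw [Finset.sum_comm]
      rw [← Finset.sum_neg_distrib]
      refine Finset.sum_congr rfl fun i _ => ?_
      simp only [hs, he, Finset.mul_sum, Finset.sum_mul, ← Finset.sum_neg_distrib]
      refine Finset.sum_congr rfl fun a _ => ?_
      ring
    have hkey : ∑ i, s i ^ 2
        ≤ ∑ a, d a ^ 2 * ((∑ i, ∑ b, W i a * W i b * ht b) / ht a) := by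
      have hQ : ∑ a, d a ^ 2 * ((∑ i, ∑ b, W i a * W i b * ht b) / ht a)
          = ∑ i, ∑ a, ∑ b, W i a * W i b * ht b * d a ^ 2 / ht a := by
        rw [Finset.sum_comm]
        refine Finset.sum_congr rfl fun a _ => ?_
        rw [show d a ^ 2 * ((∑ i, ∑ b, W i a * W i b * ht b) / ht a)
            = (∑ i, ∑ b, W i a * W i b * ht b) * d a ^ 2 / ht a by ring,
          Finset.sum_mul, Finset.sum_div]
        refine Finset.sum_congr rfl fun i _ => ?_
        rw [Finset.sum_mul, Finset.sum_div]
      have hS : ∑ i, s i ^ 2 = ∑ i, ∑ a, ∑ b, W i a * W i b * d a * d b := by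
        refine Finset.sum_congr rfl fun i _ => ?_
        rw [sq, hs, Finset.sum_mul_sum]
        refine Finset.sum_congr rfl fun a _ => Finset.sum_congr rfl fun b _ => ?_
        ring
      rw [hQ, hS]
      refine Finset.sum_le_sum fun i _ => ?_
      set f : Fin r → Fin r → ℝ := fun a b =>
        W i a * W i b * ht b * d a ^ 2 / ht a - W i a * W i b * d a * d b with hf
      have hsymm : ∑ a, ∑ b, f a b = (1/2) * ∑ a, ∑ b, (f a b + f b a) := by
        have hsw : ∑ a, ∑ b, f b a = ∑ a, ∑ b, f a b :=
          Finset.sum_comm (s := (Finset.univ : Finset (Fin r)))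
            (t := Finset.univ) (f := fun a b => f b a)
        simp only [Finset.sum_add_distrib]
        rw [hsw]
        ring
      have hnn : 0 ≤ ∑ a, ∑ b, f a b := by
        rw [hsymm]
        have : ∀ a ∈ (Finset.univ : Finset (Fin r)), 0 ≤ ∑ b, (f a b + f b a) := by
          intro a _
          refine Finset.sum_nonneg fun b _ => ?_
          have hab : f a b + f b a
              = W i a * W i b * (ht b * d a - ht a * d b) ^ 2 / (ht a * ht b) := by
            show (W i a * W i b * ht b * d a ^ 2 / ht a - W i a * W i b * d a * d b)
                + (W i b * W i a * ht a * d b ^ 2 / ht b - W i b * W i a * d b * d a) = _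
            have h3 := (hht a).ne'
            have h4 := (hht b).ne'
            field_simp
            ring
          rw [hab]
          have h1 := hW i a
          have h2 := hW i b
          have h3 := hht a
          have h4 := hht b
          positivity
        nlinarith [Finset.sum_nonneg this]
      have : ∑ a, ∑ b, f a b
          = (∑ a, ∑ b, W i a * W i b * ht b * d a ^ 2 / ht a)
            - ∑ a, ∑ b, W i a * W i b * d a * d b := by
        rw [← Finset.sum_sub_distrib]
        exact Finset.sum_congr rfl fun a _ => Finset.sum_sub_distrib
            (fun b => W i a * W i b * ht b * d a ^ 2 / ht a) (fun b => W i a * W i b * d a * d b)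
      linarith [this ▸ hnn]
    rw [hG, hF h, hF ht]
    have hexp : ∑ i, (v i - ∑ a, W i a * h a) ^ 2
        = ∑ i, (e i ^ 2 - 2 * e i * s i + s i ^ 2) := by
      refine Finset.sum_congr rfl fun i _ => ?_
      rw [hsplit i]; ring
    rw [hexp, hcross]
    simp only [Finset.sum_add_distrib, Finset.sum_sub_distrib]
    have h2 : (∑ i, 2 * e i * s i) = 2 * ∑ i, e i * s i := by
      rw [Finset.mul_sum]; exact Finset.sum_congr rfl fun i _ => by ring
    nlinarith [hkey]
  · rw [hG]
    simp
end

section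
/- Under the multiplicative update h^{t+1}_a = h^t_a (W^T v)_a / (W^T W h^t)_a (with all quantities positive), the Euclidean cost F(h) = (1/2)‖v − Wh‖² satisfies F(h^{t+1}) ≤ F(h^t). -/
open Finset

lemma key_ineq {r : ℕ} (A : Fin r → Fin r → ℝ) (hA : ∀ a b, 0 ≤ A a b)
    (hsym : ∀ a b, A a b = A b a) (u d : Fin r → ℝ) (hu : ∀ a, 0 < u a) :
    ∑ a, ∑ b, A a b * d a * d b ≤ ∑ a, (∑ b, A a b * u b) / u a * d a ^ 2 := by
  have step1 : ∑ a, ∑ b, A a b * d a * d b ≤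
      ∑ a, ∑ b, A a b * u a * u b * ((d a / u a) ^ 2 + (d b / u b) ^ 2) / 2 := by
    apply Finset.sum_le_sum; intro a _
    apply Finset.sum_le_sum; intro b _
    have hua := (hu a).ne'
    have hub := (hu b).ne'
    have hxy : (d a / u a) * (d b / u b) ≤ ((d a / u a) ^ 2 + (d b / u b) ^ 2) / 2 := by
      nlinarith [sq_nonneg (d a / u a - d b / u b)]
    have heq : A a b * d a * d b = A a b * u a * u b * ((d a / u a) * (d b / u b)) := by
      field_simp
    have hpos : 0 ≤ A a b * u a * u b :=
      mul_nonneg (mul_nonneg (hA a b) (hu a).le) (hu b).le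
    calc A a b * d a * d b = A a b * u a * u b * ((d a / u a) * (d b / u b)) := heq
      _ ≤ A a b * u a * u b * (((d a / u a) ^ 2 + (d b / u b) ^ 2) / 2) :=
          mul_le_mul_of_nonneg_left hxy hpos
      _ = A a b * u a * u b * ((d a / u a) ^ 2 + (d b / u b) ^ 2) / 2 := by ring
  have e1 : ∀ a b : Fin r, A a b * u a * u b * ((d a / u a) ^ 2 + (d b / u b) ^ 2) / 2
      = A a b * u b * d a ^ 2 / u a / 2 + A a b * u a * d b ^ 2 / u b / 2 := by
    intro a b
    have hua := (hu a).ne'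
    have hub := (hu b).ne'
    field_simp
  have hswap : ∑ a, ∑ b, A a b * u a * d b ^ 2 / u b / 2
      = ∑ a, ∑ b, A a b * u b * d a ^ 2 / u a / 2 := by
    rw [Finset.sum_comm]
    refine Finset.sum_congr rfl fun a _ => Finset.sum_congr rfl fun b _ => ?_
    rw [hsym]
  have step2 : ∑ a, ∑ b, A a b * u a * u b * ((d a / u a) ^ 2 + (d b / u b) ^ 2) / 2
      = ∑ a, (∑ b, A a b * u b) / u a * d a ^ 2 := by
    calc ∑ a, ∑ b, A a b * u a * u b * ((d a / u a) ^ 2 + (d b / u b) ^ 2) / 2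
        = ∑ a, ∑ b, (A a b * u b * d a ^ 2 / u a / 2 + A a b * u a * d b ^ 2 / u b / 2) :=
          Finset.sum_congr rfl fun a _ => Finset.sum_congr rfl fun b _ => e1 a b
      _ = (∑ a, ∑ b, A a b * u b * d a ^ 2 / u a / 2)
          + ∑ a, ∑ b, A a b * u a * d b ^ 2 / u b / 2 := by
          rw [← Finset.sum_add_distrib]
          refine Finset.sum_congr rfl fun a _ => ?_
          rw [← Finset.sum_add_distrib]
      _ = (∑ a, ∑ b, A a b * u b * d a ^ 2 / u a / 2)
          + ∑ a, ∑ b, A a b * u b * d a ^ 2 / u a / 2 := by rw [hswap]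
      _ = ∑ a, (∑ b, A a b * u b) / u a * d a ^ 2 := by
          rw [← Finset.sum_add_distrib]
          refine Finset.sum_congr rfl fun a _ => ?_
          rw [← Finset.sum_add_distrib, Finset.sum_div, Finset.sum_mul]
          refine Finset.sum_congr rfl fun b _ => ?_
          ring
  linarith

theorem multiplicative_update_decreases_euclidean {n r : ℕ}
    (W : Fin n → Fin r → ℝ) (hW : ∀ i a, 0 ≤ W i a)
    (v : Fin n → ℝ) (hv : ∀ i, 0 ≤ v i)
    (ht : Fin r → ℝ) (hht : ∀ a, 0 < ht a)
    (hWv : ∀ a, 0 < ∑ i, W i a * v i)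
    (hWWh : ∀ a, 0 < ∑ i, ∑ b, W i a * W i b * ht b)
    (ht1 : Fin r → ℝ)
    (hupd : ∀ a, ht1 a = ht a * (∑ i, W i a * v i) / (∑ i, ∑ b, W i a * W i b * ht b))
    (F : (Fin r → ℝ) → ℝ)
    (hF : ∀ h, F h = (1 / 2) * ∑ i, (v i - ∑ a, W i a * h a) ^ 2) :
    F ht1 ≤ F ht := by
  set A : Fin r → Fin r → ℝ := fun a b => ∑ i, W i a * W i b with hA_def
  set bb : Fin r → ℝ := fun a => ∑ i, W i a * v i with hbb_def
  set c : Fin r → ℝ := fun a => ∑ i, ∑ b, W i a * W i b * ht b with hc_def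
  set d : Fin r → ℝ := fun a => ht1 a - ht a with hd_def
  set P : Fin n → ℝ := fun i => ∑ a, W i a * ht a with hP_def
  set Q : Fin n → ℝ := fun i => ∑ a, W i a * d a with hQ_def
  have hA_sym : ∀ a b, A a b = A b a := by
    intro a b; apply Finset.sum_congr rfl; intro i _; ring
  have hA_nonneg : ∀ a b, 0 ≤ A a b := by
    intro a b; apply Finset.sum_nonneg; intro i _; exact mul_nonneg (hW i a) (hW i b)
  have hc_alt : ∀ a, c a = ∑ b, A a b * ht b := by
    intro a
    show (∑ i, ∑ b, W i a * W i b * ht b) = ∑ b, A a b * ht b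
    rw [Finset.sum_comm]
    refine Finset.sum_congr rfl fun b _ => ?_
    show (∑ i, W i a * W i b * ht b) = (∑ i, W i a * W i b) * ht b
    rw [Finset.sum_mul]
  have hcpos : ∀ a, 0 < c a := hWWh
  have hd_eq : ∀ a, d a = ht a * (bb a - c a) / c a := by
    intro a
    show ht1 a - ht a = ht a * (bb a - c a) / c a
    rw [hupd a]
    have h1 := (hcpos a).ne'
    show ht a * bb a / c a - ht a = ht a * (bb a - c a) / c a
    field_simp
  have hd_key : ∀ a, d a * (bb a - c a) = (c a / ht a) * d a ^ 2 := by
    intro a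
    rw [hd_eq a]
    have h1 := (hcpos a).ne'
    have h2 := (hht a).ne'
    field_simp
  have hW1 : ∀ i, ∑ a, W i a * ht1 a = P i + Q i := by
    intro i
    show _ = (∑ a, W i a * ht a) + ∑ a, W i a * d a
    rw [← Finset.sum_add_distrib]
    refine Finset.sum_congr rfl fun a _ => ?_
    show W i a * ht1 a = W i a * ht a + W i a * (ht1 a - ht a)
    ring
  have hS1 : ∑ i, (v i - P i) * Q i = ∑ a, d a * (bb a - c a) := by
    calc ∑ i, (v i - P i) * Q i = ∑ i, ∑ a, (v i - P i) * W i a * d a := by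
          refine Finset.sum_congr rfl fun i _ => ?_
          show (v i - P i) * ∑ a, W i a * d a = _
          rw [Finset.mul_sum]
          refine Finset.sum_congr rfl fun a _ => ?_
          ring
      _ = ∑ a, ∑ i, (v i - P i) * W i a * d a := Finset.sum_comm
      _ = ∑ a, d a * (bb a - c a) := by
          refine Finset.sum_congr rfl fun a _ => ?_
          have h1 : ∑ i, (v i - P i) * W i a * d a
              = (∑ i, W i a * v i - ∑ i, W i a * P i) * d a := by
            rw [← Finset.sum_sub_distrib, Finset.sum_mul]
            refine Finset.sum_congr rfl fun i _ => ?_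
            ring
          rw [h1]
          have hcP : ∑ i, W i a * P i = c a := by
            show _ = ∑ i, ∑ b, W i a * W i b * ht b
            refine Finset.sum_congr rfl fun i _ => ?_
            show W i a * ∑ b, W i b * ht b = _
            rw [Finset.mul_sum]
            refine Finset.sum_congr rfl fun b _ => ?_
            ring
          rw [hcP]
          ring
  have hS2 : ∑ i, Q i ^ 2 = ∑ a, ∑ b, A a b * d a * d b := by
    calc ∑ i, Q i ^ 2 = ∑ i, ∑ a, ∑ b, W i a * d a * (W i b * d b) := by
          refine Finset.sum_congr rfl fun i _ => ?_
          show (∑ a, W i a * d a) ^ 2 = _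
          rw [sq, Finset.sum_mul_sum]
      _ = ∑ a, ∑ i, ∑ b, W i a * d a * (W i b * d b) := Finset.sum_comm
      _ = ∑ a, ∑ b, ∑ i, W i a * d a * (W i b * d b) := by
          refine Finset.sum_congr rfl fun a _ => Finset.sum_comm
      _ = ∑ a, ∑ b, A a b * d a * d b := by
          refine Finset.sum_congr rfl fun a _ => Finset.sum_congr rfl fun b _ => ?_
          show _ = (∑ i, W i a * W i b) * d a * d b
          rw [Finset.sum_mul, Finset.sum_mul]
          refine Finset.sum_congr rfl fun i _ => ?_
          ring
  have hFdiff : F ht - F ht1 = (∑ i, (v i - P i) * Q i) - (1 / 2) * ∑ i, Q i ^ 2 := by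
    rw [hF ht, hF ht1]
    have e : ∀ i : Fin n, (1 / 2) * (v i - ∑ a, W i a * ht a) ^ 2
        - (1 / 2) * (v i - ∑ a, W i a * ht1 a) ^ 2
        = (v i - P i) * Q i - (1 / 2) * Q i ^ 2 := by
      intro i
      have h1 : ∑ a, W i a * ht1 a = P i + Q i := hW1 i
      have h2 : (∑ a, W i a * ht a) = P i := rfl
      rw [h1, h2]; ring
    calc (1 / 2) * (∑ i, (v i - ∑ a, W i a * ht a) ^ 2)
          - (1 / 2) * ∑ i, (v i - ∑ a, W i a * ht1 a) ^ 2
        = ∑ i, ((1 / 2) * (v i - ∑ a, W i a * ht a) ^ 2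
            - (1 / 2) * (v i - ∑ a, W i a * ht1 a) ^ 2) := by
          rw [Finset.mul_sum, Finset.mul_sum, ← Finset.sum_sub_distrib]
      _ = ∑ i, ((v i - P i) * Q i - (1 / 2) * Q i ^ 2) :=
          Finset.sum_congr rfl fun i _ => e i
      _ = (∑ i, (v i - P i) * Q i) - (1 / 2) * ∑ i, Q i ^ 2 := by
          rw [Finset.sum_sub_distrib, ← Finset.mul_sum]
  have hkey : ∑ a, ∑ b, A a b * d a * d b ≤ ∑ a, (∑ b, A a b * ht b) / ht a * d a ^ 2 :=
    key_ineq A hA_nonneg hA_sym ht d hht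
  have hS1' : ∑ a, d a * (bb a - c a) = ∑ a, (c a / ht a) * d a ^ 2 :=
    Finset.sum_congr rfl fun a _ => hd_key a
  have hrhs : ∑ a, (∑ b, A a b * ht b) / ht a * d a ^ 2 = ∑ a, (c a / ht a) * d a ^ 2 := by
    refine Finset.sum_congr rfl fun a _ => ?_
    rw [← hc_alt a]
  have hnn : 0 ≤ ∑ a, (c a / ht a) * d a ^ 2 := by
    apply Finset.sum_nonneg; intro a _
    have h1 : 0 ≤ c a / ht a := le_of_lt (div_pos (hcpos a) (hht a))
    positivity
  have hfinal : 0 ≤ F ht - F ht1 := by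
    rw [hFdiff, hS1, hS1', hS2]
    rw [hrhs] at hkey
    linarith
  linarith
end

section
/- Let W ∈ ℝ^{n×r} and h, h^t ∈ ℝʳ all have strictly positive entries, and let v ∈ ℝⁿ be nonnegative. Then for each i, −v_i log(∑_a W_{ia} h_a) ≤ −∑_a v_i (W_{ia} h^t_a / ∑_b W_{ib} h^t_b) log( W_{ia} h_a ∑_b W_{ib} h^t_b / (W_{ia} h^t_a) ). -/
open Finset Real

theorem jensen_log_inequality {n r : ℕ}
    (W : Fin n → Fin r → ℝ) (hW : ∀ i a, 0 < W i a)
    (h : Fin r → ℝ) (hh : ∀ a, 0 < h a)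
    (ht : Fin r → ℝ) (hht : ∀ a, 0 < ht a)
    (v : Fin n → ℝ) (hv : ∀ i, 0 ≤ v i) :
    ∀ i : Fin n,
      -(v i) * Real.log (∑ a, W i a * h a) ≤
      -∑ a, v i * (W i a * ht a / ∑ b, W i b * ht b) *
          Real.log (W i a * h a * (∑ b, W i b * ht b) / (W i a * ht a)) := by
  intro i
  rcases Nat.eq_zero_or_pos r with hr | hr
  · subst hr
    simp [Real.log_zero]
  have hne : (Finset.univ : Finset (Fin r)).Nonempty := ⟨⟨0, hr⟩, Finset.mem_univ _⟩
  set S : ℝ := ∑ b, W i b * ht b with hS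
  have hSpos : 0 < S := Finset.sum_pos (fun b _ => mul_pos (hW i b) (hht b)) hne
  set α : Fin r → ℝ := fun a => W i a * ht a / S with hα
  set x : Fin r → ℝ := fun a => W i a * h a * S / (W i a * ht a) with hx
  have hαnn : ∀ a ∈ Finset.univ, (0:ℝ) ≤ α a := fun a _ =>
    div_nonneg (mul_pos (hW i a) (hht a)).le hSpos.le
  have hαsum : ∑ a, α a = 1 := by
    simp only [hα]
    rw [← Finset.sum_div, ← hS, div_self hSpos.ne']
  have hxmem : ∀ a ∈ Finset.univ, x a ∈ Set.Ioi (0:ℝ) := fun a _ =>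
    div_pos (mul_pos (mul_pos (hW i a) (hh a)) hSpos) (mul_pos (hW i a) (hht a))
  have hJ := strictConcaveOn_log_Ioi.concaveOn.le_map_sum hαnn hαsum hxmem
  have hsum : ∑ a, α a • x a = ∑ a, W i a * h a := by
    apply Finset.sum_congr rfl
    intro a _
    have h1 : W i a * ht a ≠ 0 := (mul_pos (hW i a) (hht a)).ne'
    simp only [hα, hx, smul_eq_mul]
    field_simp
    rw [mul_right_comm (W i a), mul_div_cancel_right₀ _ (hht a).ne']
  rw [hsum] at hJ
  have hkey : ∑ a, α a * Real.log (x a) ≤ Real.log (∑ a, W i a * h a) := by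
    simpa [smul_eq_mul] using hJ
  have := mul_le_mul_of_nonneg_left hkey (hv i)
  rw [Finset.mul_sum] at this
  have heq : ∀ a, v i * (α a * Real.log (x a)) =
      v i * (W i a * ht a / S) * Real.log (W i a * h a * S / (W i a * ht a)) := by
    intro a; simp only [hα, hx]; ring
  simp only [heq] at this
  linarith
end

section
/- Under the multiplicative update h^{t+1}_a = h^t_a (∑_i W_{ia} v_i / (W h^t)_i) / (∑_k W_{ka}) with W, v, h^t strictly positive, the generalized KL divergence F(h) = ∑_i [v_i log(v_i/(Wh)_i) − v_i + (Wh)_i] satisfies F(h^{t+1}) ≤ F(h^t). -/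
/-!
Write the update as `h' = h * x` with `x a = c a / S a`, where `S a = ∑ i, W i a` and
`c a = ∑ i, W i a * v i / (W h) i`. Concavity of `log` (Jensen, with the weights
`W i a * h a / (W h) i` of row `i`) bounds `F (h * x) - F h` for every positive `x` by
`∑ a, h a * (S a * (x a - 1) - c a * log (x a))`, the Lee–Seung auxiliary function. The update
minimises each summand in `x a`, and at `x a = c a / S a` the summand is nonpositive because
`x - 1 ≤ x * log x`.
-/

open Finset Real

variable {ι κ : Type*} [Fintype ι] [Fintype κ]

noncomputable def genKLDiv (v y : ι → ℝ) : ℝ := ∑ i, (v i * log (v i / y i) - v i + y i)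

lemma sum_mul_log_le_log_sum_mul (w x : κ → ℝ) (hw : ∀ a, 0 ≤ w a) (hw₁ : ∑ a, w a = 1)
    (hx : ∀ a, 0 < x a) : ∑ a, w a * log (x a) ≤ log (∑ a, w a * x a) :=
  strictConcaveOn_log_Ioi.concaveOn.le_map_sum (fun a _ => hw a) hw₁ (fun a _ => hx a)

lemma mul_log_div_sum_mul_le [Nonempty κ] {v : ℝ} (hv : 0 < v) {w x : κ → ℝ}
    (hw : ∀ a, 0 < w a) (hx : ∀ a, 0 < x a) :
    v * log (v / ∑ a, w a * x a) ≤
      v * log (v / ∑ a, w a) - ∑ a, v * w a / (∑ b, w b) * log (x a) := by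
  set y := ∑ a, w a
  have hy : 0 < y := sum_pos (fun a _ => hw a) univ_nonempty
  have hy' : 0 < ∑ a, w a * x a := sum_pos (fun a _ => mul_pos (hw a) (hx a)) univ_nonempty
  have jensen := sum_mul_log_le_log_sum_mul (fun a => w a / y) x
    (fun a => (div_pos (hw a) hy).le) (by rw [← sum_div, div_self hy.ne']) hx
  simp only [div_mul_eq_mul_div, ← sum_div] at jensen
  have hsum : ∑ a, v * w a / y * log (x a) = v * ((∑ a, w a * log (x a)) / y) := by
    rw [sum_div, mul_sum]; exact sum_congr rfl fun a _ => by ring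
  rw [hsum, log_div hv.ne' hy'.ne', log_div hv.ne' hy.ne']
  rw [log_div hy'.ne' hy.ne'] at jensen
  linarith [mul_le_mul_of_nonneg_left jensen hv.le]

lemma genKLDiv_mul_le (W : ι → κ → ℝ) (hW : ∀ i a, 0 < W i a) (v : ι → ℝ) (hv : ∀ i, 0 < v i)
    (h : κ → ℝ) (hh : ∀ a, 0 < h a) (x : κ → ℝ) (hx : ∀ a, 0 < x a) :
    genKLDiv v (fun i => ∑ a, W i a * (h a * x a)) ≤
      genKLDiv v (fun i => ∑ a, W i a * h a) +
        ∑ a, h a * ((∑ i, W i a) * (x a - 1) -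
          (∑ i, W i a * v i / ∑ b, W i b * h b) * log (x a)) := by
  cases isEmpty_or_nonempty κ
  · simp
  have row : ∀ i, v i * log (v i / ∑ a, W i a * (h a * x a)) - v i + ∑ a, W i a * (h a * x a) ≤
      (v i * log (v i / ∑ a, W i a * h a) - v i + ∑ a, W i a * h a) +
        ∑ a, (W i a * h a * (x a - 1) - v i * (W i a * h a) / (∑ b, W i b * h b) * log (x a)) := by
    intro i
    have hlog := mul_log_div_sum_mul_le (hv i) (fun a => mul_pos (hW i a) (hh a)) hx
    have hlin : ∑ a, W i a * (h a * x a) = ∑ a, W i a * h a + ∑ a, W i a * h a * (x a - 1) := by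
      rw [← sum_add_distrib]; exact sum_congr rfl fun a _ => by ring
    simp only [mul_assoc] at hlog
    rw [sum_sub_distrib]
    linarith [hlin]
  calc _ ≤ _ := sum_le_sum fun i _ => row i
    _ = _ := by
      rw [sum_add_distrib, sum_comm]
      congr 1
      refine sum_congr rfl fun a _ => ?_
      simp only [sum_mul, mul_sum, ← sum_sub_distrib]
      exact sum_congr rfl fun i _ => by ring

lemma mul_div_sub_one_le_mul_log_div {c S : ℝ} (hc : 0 ≤ c) (hS : 0 < S) :
    S * (c / S - 1) ≤ c * log (c / S) := by
  calc S * (c / S - 1) ≤ S * (c / S * log (c / S)) :=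
        mul_le_mul_of_nonneg_left (self_sub_one_le_mul_log (div_nonneg hc hS.le)) hS.le
    _ = c * log (c / S) := by rw [← mul_assoc, mul_div_cancel₀ c hS.ne']

theorem multiplicative_update_decreases_kl {n r : ℕ}
    (W : Fin n → Fin r → ℝ) (hW : ∀ i a, 0 < W i a)
    (v : Fin n → ℝ) (hv : ∀ i, 0 < v i)
    (ht : Fin r → ℝ) (hht : ∀ a, 0 < ht a)
    (ht1 : Fin r → ℝ)
    (hupd : ∀ a, ht1 a = ht a * (∑ i, W i a * v i / ∑ b, W i b * ht b) / (∑ k, W k a))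
    (F : (Fin r → ℝ) → ℝ)
    (hF : ∀ h, F h = ∑ i, (v i * Real.log (v i / ∑ a, W i a * h a) - v i + ∑ a, W i a * h a)) :
    F ht1 ≤ F ht := by
  cases isEmpty_or_nonempty (Fin n)
  · simp [hF]
  set S := fun a => ∑ k, W k a
  set c := fun a => ∑ i, W i a * v i / ∑ b, W i b * ht b
  have hS : ∀ a, 0 < S a := fun a => sum_pos (fun k _ => hW k a) univ_nonempty
  have hc : ∀ a, 0 < c a := fun a => sum_pos (fun i _ => div_pos (mul_pos (hW i a) (hv i))
    (sum_pos (fun b _ => mul_pos (hW i b) (hht b)) ⟨a, mem_univ a⟩)) univ_nonempty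
  have hht1 : ht1 = fun a => ht a * (c a / S a) := funext fun a => by rw [hupd, mul_div_assoc]
  have hstep : ∀ a, S a * (c a / S a - 1) - c a * log (c a / S a) ≤ 0 := fun a =>
    sub_nonpos.2 (mul_div_sub_one_le_mul_log_div (hc a).le (hS a))
  calc F ht1 ≤ genKLDiv v (fun i => ∑ a, W i a * ht a) +
        ∑ a, ht a * (S a * (c a / S a - 1) - c a * log (c a / S a)) := by
        rw [hF, hht1]
        exact genKLDiv_mul_le W hW v hv ht hht _ fun a => div_pos (hc a) (hS a)
    _ ≤ F ht := by
        rw [hF]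
        exact add_le_of_nonpos_right (sum_nonpos fun a _ =>
          mul_nonpos_of_nonneg_of_nonpos (hht a).le (hstep a))
end
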